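/- arXiv:2006.10788 — 4 statements merged into one kernel-verified Lean document; each statement's English description precedes it below -/
import Mathlib

section
/- Anti-holomorphic Koenigs linearization: Let z₀ ∈ ℂ, let g be complex analytic at conj z₀ with g(conj z₀) = z₀, so that f(z) = g(conj z) is an anti-analytic map with fixed point z₀, and let L = |deriv g (conj z₀)| be its real multiplier. If L ≠ 0 and L ≠ 1, then there exists a function φ : ℂ → ℂ, complex analytic at z₀, with φ(z₀) = 0 and |deriv φ z₀| = 1, such that φ(f(z)) = L · conj(φ(z)) for all z in some neighborhood of z₀. -/
open Complex Filter ComplexConjugate Metric Topology Asymptotics Set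

/-!
The second iterate `F = f ∘ f = g ∘ (conj ∘ g ∘ conj)` is holomorphic at `z₀` with multiplier
`μ = λ · conj λ = L²`, so Koenigs' theorem gives `ψ` with `ψ ∘ F = L² ψ` and `ψ' z₀ = 1`.
For `|μ| < 1`, `ψ` is the uniform limit on a small disc of `(F^[n] - z₀) / μ ^ n`: the iterates
contract at a rate `ρ` with `|μ| < ρ < √|μ|`, and `F w - z₀ - μ (w - z₀) = O(|w - z₀|²)`, so the
successive differences are `O((ρ² / |μ|) ^ n)`. For `|μ| > 1` one linearizes the local inverse.

Since `χ = conj ∘ ψ ∘ f` is holomorphic with `conj ∘ χ = ψ ∘ f` and `χ ∘ f = L² · conj ∘ ψ`, the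
map `φ = (c / 2) ψ + (conj c / 2L) χ` satisfies `φ ∘ f = L · conj ∘ φ` for every `c`; taking
`c² = conj λ / L` makes `φ' z₀ = c` a unit.
-/

theorem exists_tendstoUniformlyOn_of_norm_succ_sub_le {β E : Type*} [NormedAddCommGroup E]
    [CompleteSpace E] {f : ℕ → β → E} {u : ℕ → ℝ} {s : Set β} (hu : Summable u)
    (hfu : ∀ n, ∀ x ∈ s, ‖f (n + 1) x - f n x‖ ≤ u n) :
    ∃ g, TendstoUniformlyOn f g atTop s := by
  have hsum := tendstoUniformlyOn_tsum_nat hu hfu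
  refine ⟨fun x => f 0 x + ∑' n, (f (n + 1) x - f n x), ?_⟩
  rw [Metric.tendstoUniformlyOn_iff] at hsum ⊢
  intro ε hε
  filter_upwards [hsum ε hε] with N hN x hx
  have h := hN x hx
  rw [Finset.sum_range_sub (fun n => f n x), dist_eq_norm] at h
  rw [dist_eq_norm]
  convert h using 2
  abel

theorem AnalyticAt.isBigO_sub_sub_deriv_mul {𝕜 : Type*} [NontriviallyNormedField 𝕜] {F : 𝕜 → 𝕜}
    {z₀ : 𝕜} (hF : AnalyticAt 𝕜 F z₀) :
    (fun z => F z - F z₀ - deriv F z₀ * (z - z₀)) =O[𝓝 z₀] fun z => (z - z₀) ^ 2 := by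
  obtain ⟨p, hp⟩ := hF
  -- the left side is `(z - z₀) * (dslope F z₀ z - dslope F z₀ z₀)`, and `dslope F z₀` is analytic
  have hslope :=
    hp.has_fpower_series_dslope_fslope.analyticAt.differentiableAt.hasDerivAt.isBigO_sub
  refine ((isBigO_refl (fun z => z - z₀) _).mul hslope).congr (fun z => ?_) (fun z => by ring)
  rw [← dslope_same, mul_sub, ← smul_eq_mul (z - z₀) (dslope F z₀ z), sub_smul_dslope]
  ring

theorem AnalyticAt.conj_conj {f : ℂ → ℂ} {x : ℂ} (hf : AnalyticAt ℂ f x) :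
    AnalyticAt ℂ (conj ∘ f ∘ conj) (conj x) := by
  rw [analyticAt_iff_eventually_differentiableAt] at hf ⊢
  have hconj : Tendsto conj (𝓝 (conj x)) (𝓝 x) := by
    simpa using continuous_conj.tendsto (conj x)
  filter_upwards [hconj.eventually hf] with z hz
  exact differentiableAt_conj_conj_iff.2 hz

section Contraction

variable {X : Type*} [PseudoMetricSpace X] {F : X → X} {x₀ : X} {r ρ : ℝ}

theorem mapsTo_closedBall_of_dist_le_mul (hρ : ρ ≤ 1)
    (hF : ∀ x ∈ closedBall x₀ r, dist (F x) x₀ ≤ ρ * dist x x₀) :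
    MapsTo F (closedBall x₀ r) (closedBall x₀ r) := fun x hx =>
  (hF x hx).trans <| (mul_le_of_le_one_left dist_nonneg hρ).trans hx

theorem dist_iterate_le_pow_mul (hρ₀ : 0 ≤ ρ) (hρ₁ : ρ ≤ 1)
    (hF : ∀ x ∈ closedBall x₀ r, dist (F x) x₀ ≤ ρ * dist x x₀) (n : ℕ) {x : X}
    (hx : x ∈ closedBall x₀ r) : dist (F^[n] x) x₀ ≤ ρ ^ n * dist x x₀ := by
  induction n with
  | zero => simp
  | succ n ih =>
    rw [Function.iterate_succ_apply', pow_succ', mul_assoc]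
    calc dist (F (F^[n] x)) x₀ ≤ ρ * dist (F^[n] x) x₀ :=
          hF _ ((mapsTo_closedBall_of_dist_le_mul hρ₁ hF).iterate n hx)
      _ ≤ ρ * (ρ ^ n * dist x x₀) := by gcongr

end Contraction

section KoenigsApprox

variable {𝕜 : Type*} [NontriviallyNormedField 𝕜] {F : 𝕜 → 𝕜} {z₀ μ : 𝕜} {r ρ C : ℝ}

def koenigsApprox (F : 𝕜 → 𝕜) (z₀ μ : 𝕜) (n : ℕ) (z : 𝕜) : 𝕜 := (F^[n] z - z₀) / μ ^ n

theorem koenigsApprox_self (hfix : F z₀ = z₀) (n : ℕ) : koenigsApprox F z₀ μ n z₀ = 0 := by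
  simp [koenigsApprox, Function.iterate_fixed hfix]

theorem hasDerivAt_koenigsApprox (hF : DifferentiableAt 𝕜 F z₀) (hfix : F z₀ = z₀) (n : ℕ) :
    HasDerivAt (koenigsApprox F z₀ μ n) (deriv F z₀ ^ n / μ ^ n) z₀ :=
  ((HasDerivAt.iterate z₀ hF.hasDerivAt hfix n).sub_const z₀).div_const _

theorem koenigsApprox_apply_map (hμ : μ ≠ 0) (n : ℕ) (z : 𝕜) :
    koenigsApprox F z₀ μ n (F z) = μ * koenigsApprox F z₀ μ (n + 1) z := by
  rw [koenigsApprox, koenigsApprox, ← Function.iterate_succ_apply, pow_succ']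
  field_simp

theorem dist_le_mul_of_norm_sub_mul_le (hC : 0 ≤ C) (hρ : ‖μ‖ + C * r ≤ ρ)
    (hquad : ∀ z ∈ closedBall z₀ r, ‖F z - z₀ - μ * (z - z₀)‖ ≤ C * dist z z₀ ^ 2) :
    ∀ z ∈ closedBall z₀ r, dist (F z) z₀ ≤ ρ * dist z z₀ := by
  intro z hz
  have hz' : dist z z₀ ≤ r := hz
  calc dist (F z) z₀ = ‖μ * (z - z₀) + (F z - z₀ - μ * (z - z₀))‖ := by
        rw [dist_eq_norm]; ring_nf
    _ ≤ ‖μ * (z - z₀)‖ + ‖F z - z₀ - μ * (z - z₀)‖ := norm_add_le _ _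
    _ ≤ ‖μ‖ * dist z z₀ + C * dist z z₀ ^ 2 := by
        rw [norm_mul, ← dist_eq_norm]
        gcongr
        exact hquad z hz
    _ ≤ (‖μ‖ + C * r) * dist z z₀ := by
        have := mul_le_mul_of_nonneg_left
          (mul_le_mul_of_nonneg_right hz' (dist_nonneg (x := z) (y := z₀))) hC
        nlinarith
    _ ≤ ρ * dist z z₀ := by gcongr

theorem norm_koenigsApprox_succ_sub_le (hμ : μ ≠ 0) (hρ₀ : 0 ≤ ρ) (hρ₁ : ρ ≤ 1) (hC : 0 ≤ C)
    (hquad : ∀ z ∈ closedBall z₀ r, ‖F z - z₀ - μ * (z - z₀)‖ ≤ C * dist z z₀ ^ 2)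
    (hF : ∀ z ∈ closedBall z₀ r, dist (F z) z₀ ≤ ρ * dist z z₀) (n : ℕ) {z : 𝕜}
    (hz : z ∈ closedBall z₀ r) :
    ‖koenigsApprox F z₀ μ (n + 1) z - koenigsApprox F z₀ μ n z‖
      ≤ C * r ^ 2 / ‖μ‖ * (ρ ^ 2 / ‖μ‖) ^ n := by
  set w := F^[n] z
  have hw : w ∈ closedBall z₀ r := (mapsTo_closedBall_of_dist_le_mul hρ₁ hF).iterate n hz
  have hdist : dist w z₀ ≤ ρ ^ n * r :=
    (dist_iterate_le_pow_mul hρ₀ hρ₁ hF n hz).trans (by gcongr; exact hz)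
  have hstep : koenigsApprox F z₀ μ (n + 1) z - koenigsApprox F z₀ μ n z
      = (F w - z₀ - μ * (w - z₀)) / μ ^ (n + 1) := by
    rw [koenigsApprox, koenigsApprox, Function.iterate_succ_apply']
    field_simp
    ring
  calc _ = ‖F w - z₀ - μ * (w - z₀)‖ / ‖μ‖ ^ (n + 1) := by rw [hstep, norm_div, norm_pow]
    _ ≤ C * (ρ ^ n * r) ^ 2 / ‖μ‖ ^ (n + 1) := by
        gcongr
        exact (hquad w hw).trans (by gcongr)
    _ = C * r ^ 2 / ‖μ‖ * (ρ ^ 2 / ‖μ‖) ^ n := by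
        have : ‖μ‖ ≠ 0 := norm_ne_zero_iff.2 hμ
        rw [div_pow, mul_pow, ← pow_mul, ← pow_mul, mul_comm n 2]
        field_simp
        ring

theorem exists_tendstoUniformlyOn_koenigsApprox [CompleteSpace 𝕜] (hμ : μ ≠ 0) (hρ₀ : 0 ≤ ρ)
    (hρ₁ : ρ ≤ 1) (hρμ : ρ ^ 2 < ‖μ‖) (hC : 0 ≤ C)
    (hquad : ∀ z ∈ closedBall z₀ r, ‖F z - z₀ - μ * (z - z₀)‖ ≤ C * dist z z₀ ^ 2)
    (hF : ∀ z ∈ closedBall z₀ r, dist (F z) z₀ ≤ ρ * dist z z₀) :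
    ∃ ψ, TendstoUniformlyOn (koenigsApprox F z₀ μ) ψ atTop (closedBall z₀ r) := by
  have hq : ρ ^ 2 / ‖μ‖ < 1 := (div_lt_one (norm_pos_iff.2 hμ)).2 hρμ
  exact exists_tendstoUniformlyOn_of_norm_succ_sub_le
    ((summable_geometric_of_lt_one (by positivity) hq).mul_left _)
    fun n z hz => norm_koenigsApprox_succ_sub_le hμ hρ₀ hρ₁ hC hquad hF n hz

end KoenigsApprox

section Koenigs

variable {F ψ : ℂ → ℂ} {z₀ : ℂ} {r : ℝ}

theorem linearization_of_tendstoUniformlyOn_koenigsApprox (hr : 0 < r) (hfix : F z₀ = z₀)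
    (hμ : deriv F z₀ ≠ 0) (hF : DifferentiableOn ℂ F (closedBall z₀ r))
    (hmaps : MapsTo F (closedBall z₀ r) (closedBall z₀ r))
    (hψ : TendstoUniformlyOn (koenigsApprox F z₀ (deriv F z₀)) ψ atTop (closedBall z₀ r)) :
    AnalyticAt ℂ ψ z₀ ∧ ψ z₀ = 0 ∧ deriv ψ z₀ = 1 ∧
      ∀ᶠ z in 𝓝 z₀, ψ (F z) = deriv F z₀ * ψ z := by
  have hdiff : ∀ n, DifferentiableOn ℂ (koenigsApprox F z₀ (deriv F z₀) n) (ball z₀ r) := fun n =>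
    (((hF.iterate hmaps n).sub_const z₀).div_const _).mono ball_subset_closedBall
  have hloc := (hψ.mono ball_subset_closedBall).tendstoLocallyUniformlyOn
  have hF₀ := hF.differentiableAt (closedBall_mem_nhds z₀ hr)
  have hderiv : ∀ n, deriv (koenigsApprox F z₀ (deriv F z₀) n) z₀ = 1 := fun n =>
    (hasDerivAt_koenigsApprox hF₀ hfix n).deriv.trans (div_self (pow_ne_zero n hμ))
  refine ⟨(hloc.differentiableOn (.of_forall hdiff) isOpen_ball).analyticAt (ball_mem_nhds z₀ hr),
    tendsto_nhds_unique (hψ.tendsto_at (mem_closedBall_self hr.le)) ?_,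
    tendsto_nhds_unique ((hloc.deriv (.of_forall hdiff) isOpen_ball).tendsto_at
      (mem_ball_self hr)) ?_, ?_⟩
  · simp [koenigsApprox_self hfix]
  · simp [hderiv]
  · filter_upwards [closedBall_mem_nhds z₀ hr] with z hz
    refine tendsto_nhds_unique (hψ.tendsto_at (hmaps hz)) ?_
    simp_rw [koenigsApprox_apply_map hμ]
    exact ((hψ.tendsto_at hz).comp (tendsto_add_atTop_nat 1)).const_mul _

theorem exists_koenigs_linearization_of_norm_lt_one (hF : AnalyticAt ℂ F z₀) (hfix : F z₀ = z₀)
    (hμ₀ : deriv F z₀ ≠ 0) (hμ₁ : ‖deriv F z₀‖ < 1) :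
    ∃ ψ : ℂ → ℂ, AnalyticAt ℂ ψ z₀ ∧ ψ z₀ = 0 ∧ deriv ψ z₀ = 1 ∧
      ∀ᶠ z in 𝓝 z₀, ψ (F z) = deriv F z₀ * ψ z := by
  set μ := deriv F z₀
  have hμpos : 0 < ‖μ‖ := norm_pos_iff.2 hμ₀
  obtain ⟨ρ, hμρ, hρμ⟩ : ∃ ρ, ‖μ‖ < ρ ∧ ρ < √‖μ‖ :=
    exists_between ((Real.lt_sqrt hμpos.le).2 (by nlinarith))
  have hρ₀ : 0 ≤ ρ := hμpos.le.trans hμρ.le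
  have hρ₁ : ρ ≤ 1 := hρμ.le.trans (Real.sqrt_le_one.2 hμ₁.le)
  have hρ2 : ρ ^ 2 < ‖μ‖ := (Real.lt_sqrt hρ₀).1 hρμ
  obtain ⟨C, hC, hquad⟩ := hF.isBigO_sub_sub_deriv_mul.exists_pos
  have hnear : ∀ᶠ z in 𝓝 z₀,
      ‖F z - z₀ - μ * (z - z₀)‖ ≤ C * dist z z₀ ^ 2 ∧ DifferentiableAt ℂ F z := by
    filter_upwards [hquad.bound, hF.eventually_analyticAt] with z hz hzan
    exact ⟨by simpa [hfix, dist_eq_norm] using hz, hzan.differentiableAt⟩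
  have hsmall : ∀ᶠ r in 𝓝 (0 : ℝ), C * r < ρ - ‖μ‖ :=
    Tendsto.eventually_lt_const (sub_pos.2 hμρ) (by simpa using (continuous_const_mul C).tendsto 0)
  obtain ⟨r, ⟨hrC, hball⟩, hr⟩ :=
    (((hsmall.and (eventually_closedBall_subset hnear)).filter_mono nhdsWithin_le_nhds).and
      (self_mem_nhdsWithin (s := Ioi 0))).exists
  have hquad' : ∀ z ∈ closedBall z₀ r, ‖F z - z₀ - μ * (z - z₀)‖ ≤ C * dist z z₀ ^ 2 :=
    fun z hz => (hball hz).1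
  have hcontr := dist_le_mul_of_norm_sub_mul_le (ρ := ρ) hC.le (by linarith) hquad'
  obtain ⟨ψ, hψ⟩ := exists_tendstoUniformlyOn_koenigsApprox hμ₀ hρ₀ hρ₁ hρ2 hC.le hquad' hcontr
  exact ⟨ψ, linearization_of_tendstoUniformlyOn_koenigsApprox hr hfix hμ₀
    (fun z hz => (hball hz).2.differentiableWithinAt)
    (mapsTo_closedBall_of_dist_le_mul hρ₁ hcontr) hψ⟩

theorem exists_koenigs_linearization (hF : AnalyticAt ℂ F z₀) (hfix : F z₀ = z₀)
    (hμ₀ : deriv F z₀ ≠ 0) (hμ₁ : ‖deriv F z₀‖ ≠ 1) :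
    ∃ ψ : ℂ → ℂ, AnalyticAt ℂ ψ z₀ ∧ ψ z₀ = 0 ∧ deriv ψ z₀ = 1 ∧
      ∀ᶠ z in 𝓝 z₀, ψ (F z) = deriv F z₀ * ψ z := by
  rcases hμ₁.lt_or_gt with hlt | hgt
  · exact exists_koenigs_linearization_of_norm_lt_one hF hfix hμ₀ hlt
  set G := hF.hasStrictDerivAt.localInverse F (deriv F z₀) z₀ hμ₀
  have hleft : ∀ᶠ z in 𝓝 z₀, G (F z) = z := hF.hasStrictDerivAt.eventually_left_inverse hμ₀
  have hGan : AnalyticAt ℂ G z₀ := by simpa only [hfix] using hF.analyticAt_localInverse hμ₀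
  have hGfix : G z₀ = z₀ := by simpa only [hfix] using hleft.self_of_nhds
  have hG' : deriv G z₀ = (deriv F z₀)⁻¹ := by
    have := (hF.hasStrictDerivAt.to_localInverse hμ₀).hasDerivAt
    rw [hfix] at this
    exact this.deriv
  obtain ⟨ψ, hψan, hψ0, hψ1, hψG⟩ := exists_koenigs_linearization_of_norm_lt_one hGan hGfix
    (by simpa [hG'] using hμ₀) (by simpa [hG'] using inv_lt_one_of_one_lt₀ hgt)
  refine ⟨ψ, hψan, hψ0, hψ1, ?_⟩
  have hFt : Tendsto F (𝓝 z₀) (𝓝 z₀) := by simpa only [hfix] using hF.continuousAt.tendsto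
  filter_upwards [hFt.eventually hψG, hleft] with z hz hGF
  rw [hGF, hG'] at hz
  rw [hz, mul_inv_cancel_left₀ hμ₀]

end Koenigs

section Antiholomorphic

variable {g ψ : ℂ → ℂ} {z₀ : ℂ}

theorem analyticAt_comp_conj_comp_conj (hg : AnalyticAt ℂ g (conj z₀)) (hfix : g (conj z₀) = z₀) :
    AnalyticAt ℂ (fun z => g (conj (g (conj z)))) z₀ := by
  have hG : AnalyticAt ℂ (conj ∘ g ∘ conj) z₀ := by simpa only [conj_conj] using hg.conj_conj
  have hg' : AnalyticAt ℂ g ((conj ∘ g ∘ conj) z₀) := by simpa [hfix] using hg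
  exact hg'.comp hG

theorem hasDerivAt_comp_conj_comp_conj (hg : DifferentiableAt ℂ g (conj z₀))
    (hfix : g (conj z₀) = z₀) :
    HasDerivAt (fun z => g (conj (g (conj z)))) ((‖deriv g (conj z₀)‖ : ℂ) ^ 2) z₀ := by
  have hG : HasDerivAt (conj ∘ g ∘ conj) (conj (deriv g (conj z₀))) z₀ := by
    simpa only [conj_conj] using hg.hasDerivAt.conj_conj
  have hg' : HasDerivAt g (deriv g (conj z₀)) ((conj ∘ g ∘ conj) z₀) := by
    simpa [hfix] using hg.hasDerivAt
  rw [← mul_conj']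
  exact hg'.comp z₀ hG

theorem exists_antiholomorphic_linearization_of_second_iterate (hg : AnalyticAt ℂ g (conj z₀))
    (hfix : g (conj z₀) = z₀) (hl : deriv g (conj z₀) ≠ 0) (hψ : AnalyticAt ℂ ψ z₀)
    (hψ₀ : ψ z₀ = 0) (hψ₁ : deriv ψ z₀ = 1)
    (hψF : ∀ᶠ z in 𝓝 z₀, ψ (g (conj (g (conj z)))) = (‖deriv g (conj z₀)‖ : ℂ) ^ 2 * ψ z) :
    ∃ φ : ℂ → ℂ, AnalyticAt ℂ φ z₀ ∧ φ z₀ = 0 ∧ ‖deriv φ z₀‖ = 1 ∧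
      ∀ᶠ z in 𝓝 z₀, φ (g (conj z)) = (‖deriv g (conj z₀)‖ : ℂ) * conj (φ z) := by
  set l := deriv g (conj z₀)
  set L : ℝ := ‖l‖
  have hL : (L : ℂ) ≠ 0 := by simpa [L] using hl
  obtain ⟨c, hc⟩ : ∃ c : ℂ, c ^ 2 = conj l / L := IsAlgClosed.exists_pow_nat_eq _ two_pos
  have hc₁ : ‖c‖ = 1 := by
    have : ‖c‖ ^ 2 = 1 := by rw [← norm_pow, hc, norm_div, norm_conj]; simp [L, hl]
    exact (pow_eq_one_iff_of_nonneg (norm_nonneg c) two_ne_zero).1 this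
  have hcc : conj c * c = 1 := by rw [conj_mul', hc₁]; simp
  have hψ' : HasDerivAt ψ 1 (g (conj z₀)) := by
    rw [hfix, ← hψ₁]
    exact hψ.differentiableAt.hasDerivAt
  have hψg : HasDerivAt (ψ ∘ g) l (conj z₀) := by
    simpa using hψ'.comp (conj z₀) hg.differentiableAt.hasDerivAt
  set χ : ℂ → ℂ := conj ∘ (ψ ∘ g) ∘ conj
  have hχ : AnalyticAt ℂ χ z₀ := by
    simpa only [conj_conj] using (hψ.comp_of_eq hg hfix).conj_conj
  have hχ' : HasDerivAt χ (conj l) z₀ := by simpa only [conj_conj] using hψg.conj_conj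
  have hφ' : HasDerivAt (fun z => c / 2 * ψ z + conj c / (2 * L) * χ z) c z₀ := by
    refine ((hψ.differentiableAt.hasDerivAt.const_mul (c / 2)).add
      (hχ'.const_mul _)).congr_deriv ?_
    have hl' : conj l = L * c ^ 2 := by rw [hc]; field_simp
    rw [hψ₁, hl']
    field_simp
    linear_combination c * hcc
  refine ⟨fun z => c / 2 * ψ z + conj c / (2 * L) * χ z,
    (analyticAt_const.mul hψ).add (analyticAt_const.mul hχ), by simp [χ, hψ₀, hfix],
    by rw [hφ'.deriv, hc₁], ?_⟩
  filter_upwards [hψF] with z hz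
  simp only [χ, Function.comp_apply, conj_conj, hz, map_add, map_mul, map_div₀, map_pow,
    conj_ofReal, map_ofNat]
  field_simp
  ring

end Antiholomorphic

/-- Anti-holomorphic Koenigs linearization: an anti-analytic map `f z = g (conj z)`
with fixed point `z₀` and real multiplier `L = |deriv g (conj z₀)| ∉ {0, 1}` is locally
conjugate to `z ↦ L · conj z` via an analytic map `φ` with `φ z₀ = 0`, `|deriv φ z₀| = 1`. -/
theorem stmt2 (z₀ : ℂ) (g : ℂ → ℂ)
    (hg : AnalyticAt ℂ g ((starRingEnd ℂ) z₀))
    (hfix : g ((starRingEnd ℂ) z₀) = z₀)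
    (hL0 : ‖deriv g ((starRingEnd ℂ) z₀)‖ ≠ 0)
    (hL1 : ‖deriv g ((starRingEnd ℂ) z₀)‖ ≠ 1) :
    ∃ φ : ℂ → ℂ, AnalyticAt ℂ φ z₀ ∧ φ z₀ = 0 ∧ ‖deriv φ z₀‖ = 1 ∧
      ∀ᶠ z in nhds z₀,
        φ (g ((starRingEnd ℂ) z))
          = ((‖deriv g ((starRingEnd ℂ) z₀)‖ : ℂ)) * (starRingEnd ℂ) (φ z) := by
  have hF' := hasDerivAt_comp_conj_comp_conj hg.differentiableAt hfix
  obtain ⟨ψ, hψ, hψ₀, hψ₁, hψF⟩ := exists_koenigs_linearization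
    (analyticAt_comp_conj_comp_conj hg hfix) (by rw [hfix, hfix])
    (by rw [hF'.deriv]; exact_mod_cast pow_ne_zero 2 hL0)
    (by
      rw [hF'.deriv, norm_pow, norm_real, norm_norm]
      exact (pow_eq_one_iff_of_nonneg (norm_nonneg _) two_ne_zero).not.2 hL1)
  rw [hF'.deriv] at hψF
  exact exists_antiholomorphic_linearization_of_second_iterate hg hfix (norm_ne_zero_iff.1 hL0)
    hψ hψ₀ hψ₁ hψF
end

section
/- Anti-holomorphic Boettcher theorem: Let z₀ ∈ ℂ, let m ≥ 2 be a natural number, and let h be complex analytic at conj z₀ with h(conj z₀) ≠ 0. Suppose g(w) = z₀ + (w − conj z₀)^m · h(w) for all w in a neighborhood of conj z₀, so that f(z) = g(conj z) is an anti-analytic map with a superattracting fixed point of local degree m at z₀. Then there exists a function φ : ℂ → ℂ, complex analytic at z₀, with φ(z₀) = 0 and deriv φ z₀ ≠ 0, such that φ(f(z)) = conj(φ(z))^m for all z in some neighborhood of z₀. -/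
/-!
Write `g w = z₀ + (w - conj z₀) ^ m * exp (ℓ w)` and look for `φ z = (z - z₀) * exp (v z)`. The
conjugacy equation `φ (g (conj z)) = conj (φ z) ^ m` then becomes the additive equation
`m * v = a + conj ∘ v ∘ T`, where `T z = g (conj z)` and `a = conj ∘ ℓ ∘ conj`. Since `m ≥ 2`, `T`
maps every small disc around `z₀` into itself, and on such a disc the equation is solved by
`v = ∑ m⁻¹ ^ (n + 1) * (conj ∘ · ∘ T)^[n] a`: the terms are uniformly bounded, so the series
converges uniformly, and each term is holomorphic because `conj ∘ f ∘ T = conj ∘ (f ∘ g) ∘ conj`.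
-/

open Complex Filter Topology Metric Set ComplexConjugate

lemma Complex.preimage_conj_ball (c : ℂ) (r : ℝ) : conj ⁻¹' ball c r = ball (conj c) r := by
  ext z
  rw [mem_preimage, mem_ball, mem_ball, ← dist_conj_conj, conj_conj]

lemma DifferentiableOn.conj_conj {f : ℂ → ℂ} {s : Set ℂ} (hs : IsOpen s)
    (hf : DifferentiableOn ℂ f s) :
    DifferentiableOn ℂ (fun z => conj (f (conj z))) (conj ⁻¹' s) := by
  intro z hz
  have h := (hf.differentiableAt (hs.mem_nhds hz)).conj_conj
  rw [Complex.conj_conj] at h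
  exact h.differentiableWithinAt

lemma AnalyticAt.exists_eventually_exp_eq {E : Type*} [NormedAddCommGroup E] [NormedSpace ℂ E]
    {h : E → ℂ} {x : E} (hh : AnalyticAt ℂ h x) (hx : h x ≠ 0) :
    ∃ ℓ : E → ℂ, AnalyticAt ℂ ℓ x ∧ ∀ᶠ y in 𝓝 x, Complex.exp (ℓ y) = h y := by
  refine ⟨fun y => Complex.log (h x) + Complex.log (h y / h x),
    analyticAt_const.add ((analyticAt_clog ?_).comp (hh.div analyticAt_const hx)), ?_⟩
  · simp [div_self hx]
  · filter_upwards [hh.continuousAt.eventually_ne hx] with y hy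
    rw [exp_add, exp_log hx, exp_log (div_ne_zero hy hx), mul_div_cancel₀ _ hx]

lemma eventually_norm_sub_pow_mul_le {𝕜 : Type*} [NormedField 𝕜] {h : 𝕜 → 𝕜} {x : 𝕜} {m : ℕ}
    (hm : 2 ≤ m) (hh : ContinuousAt h x) :
    ∀ᶠ y in 𝓝 x, ‖(y - x) ^ m * h y‖ ≤ ‖y - x‖ := by
  have hlim : Tendsto (fun y => (y - x) ^ (m - 1) * h y) (𝓝 x) (𝓝 0) := by
    have hcont : ContinuousAt (fun y => (y - x) ^ (m - 1) * h y) x := by fun_prop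
    simpa [zero_pow (by omega : m - 1 ≠ 0)] using hcont.tendsto
  filter_upwards [hlim.norm.eventually_le_const (by simp : ‖(0 : 𝕜)‖ < 1)] with y hy
  calc ‖(y - x) ^ m * h y‖ = ‖(y - x) ^ (m - 1) * h y‖ * ‖y - x‖ := by
        rw [← norm_mul, mul_right_comm, ← pow_succ, Nat.sub_add_cancel (by omega)]
    _ ≤ ‖y - x‖ := mul_le_of_le_one_left (norm_nonneg _) hy

section BoettcherLog

variable {T : ℂ → ℂ} {s : Set ℂ}

def conjPullback (T f : ℂ → ℂ) (z : ℂ) : ℂ := conj (f (T z))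

lemma norm_iterate_conjPullback_le {a : ℂ → ℂ} {M : ℝ} (hTs : MapsTo T s s)
    (ha : ∀ z ∈ s, ‖a z‖ ≤ M) (n : ℕ) : ∀ z ∈ s, ‖(conjPullback T)^[n] a z‖ ≤ M := by
  induction n with
  | zero => exact ha
  | succ n ih =>
    intro z hz
    rw [Function.iterate_succ_apply', conjPullback, RCLike.norm_conj]
    exact ih _ (hTs hz)

lemma differentiableOn_conjPullback {f : ℂ → ℂ} (hf : DifferentiableOn ℂ f s) (hs : IsOpen s)
    (hTs : MapsTo T s s) (hT : DifferentiableOn ℂ (fun z => T (conj z)) (conj ⁻¹' s)) :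
    DifferentiableOn ℂ (conjPullback T f) s := by
  have h := (hf.comp hT fun z hz => hTs hz).conj_conj (hs.preimage continuous_conj)
  simp only [Function.comp_def, preimage_preimage, Complex.conj_conj] at h
  exact h

lemma differentiableOn_iterate_conjPullback (hs : IsOpen s) (hTs : MapsTo T s s)
    (hT : DifferentiableOn ℂ (fun z => T (conj z)) (conj ⁻¹' s)) {a : ℂ → ℂ}
    (ha : DifferentiableOn ℂ a s) (n : ℕ) : DifferentiableOn ℂ ((conjPullback T)^[n] a) s := by
  induction n with
  | zero => exact ha
  | succ n ih =>
    rw [Function.iterate_succ_apply']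
    exact differentiableOn_conjPullback ih hs hTs hT

noncomputable def boettcherLog (m : ℝ) (T a : ℂ → ℂ) (z : ℂ) : ℂ :=
  ∑' n : ℕ, ((m : ℂ) ^ (n + 1))⁻¹ * (conjPullback T)^[n] a z

variable {m : ℝ} {a : ℂ → ℂ} {M : ℝ}

lemma norm_boettcherLog_term_le (hTs : MapsTo T s s) (ha : ∀ z ∈ s, ‖a z‖ ≤ M) (n : ℕ)
    {z : ℂ} (hz : z ∈ s) :
    ‖((m : ℂ) ^ (n + 1))⁻¹ * (conjPullback T)^[n] a z‖ ≤ |m|⁻¹ ^ (n + 1) * M := by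
  rw [norm_mul, norm_inv, norm_pow, Complex.norm_real, Real.norm_eq_abs, ← inv_pow]
  exact mul_le_mul_of_nonneg_left (norm_iterate_conjPullback_le hTs ha n z hz) (by positivity)

lemma summable_geometric_abs_inv (hm : 1 < |m|) (M : ℝ) :
    Summable fun n : ℕ => |m|⁻¹ ^ (n + 1) * M :=
  ((summable_nat_add_iff 1).2
    (summable_geometric_of_lt_one (by positivity) (inv_lt_one_of_one_lt₀ hm))).mul_right M

lemma differentiableOn_boettcherLog (hm : 1 < |m|) (hs : IsOpen s) (hTs : MapsTo T s s)
    (hT : DifferentiableOn ℂ (fun z => T (conj z)) (conj ⁻¹' s))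
    (ha : DifferentiableOn ℂ a s) (haM : ∀ z ∈ s, ‖a z‖ ≤ M) :
    DifferentiableOn ℂ (boettcherLog m T a) s :=
  differentiableOn_tsum_of_summable_norm (summable_geometric_abs_inv hm M)
    (fun n => (differentiableOn_iterate_conjPullback hs hTs hT ha n).const_mul _) hs
    (fun n _ hz => norm_boettcherLog_term_le hTs haM n hz)

lemma mul_boettcherLog (hm : 1 < |m|) (hTs : MapsTo T s s) (haM : ∀ z ∈ s, ‖a z‖ ≤ M)
    {z : ℂ} (hz : z ∈ s) :
    m * boettcherLog m T a z = a z + conj (boettcherLog m T a (T z)) := by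
  have hm0 : (m : ℂ) ≠ 0 := ofReal_ne_zero.2 (abs_pos.1 (one_pos.trans hm))
  have hsum : HasSum (fun n => ((m : ℂ) ^ (n + 1))⁻¹ * (conjPullback T)^[n] a (T z))
      (boettcherLog m T a (T z)) :=
    (Summable.of_norm_bounded (summable_geometric_abs_inv hm M)
      fun n => norm_boettcherLog_term_le hTs haM n (hTs hz)).hasSum
  have hshift : HasSum (fun n => ((m : ℂ) ^ (n + 1))⁻¹ * (conjPullback T)^[n + 1] a z)
      (conj (boettcherLog m T a (T z))) := by
    convert hsum.star using 2 with n
    · rw [Function.iterate_succ_apply', conjPullback, ← starRingEnd_apply, map_mul, map_inv₀,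
        map_pow, conj_ofReal]
    · rfl
  have hfull : HasSum (fun n => ((m : ℂ) ^ n)⁻¹ * (conjPullback T)^[n] a z)
      (conj (boettcherLog m T a (T z)) + a z) := by
    simpa using (hasSum_nat_add_iff
      (f := fun n => ((m : ℂ) ^ n)⁻¹ * (conjPullback T)^[n] a z) 1).1 hshift
  have hsum_z := hfull.mul_left (m : ℂ)⁻¹
  simp only [← mul_assoc, ← mul_inv, ← pow_succ'] at hsum_z
  rw [boettcherLog, hsum_z.tsum_eq, mul_inv_cancel_left₀ hm0, add_comm]

end BoettcherLog

lemma exists_analyticAt_mul_conj_eq_add_comp {z₀ : ℂ} {m : ℝ} (hm : 1 < |m|) {g ℓ : ℂ → ℂ}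
    (hg : ∀ᶠ w in 𝓝 (conj z₀), DifferentiableAt ℂ g w ∧ ‖g w - z₀‖ ≤ ‖w - conj z₀‖)
    (hℓ : AnalyticAt ℂ ℓ (conj z₀)) :
    ∃ v : ℂ → ℂ, AnalyticAt ℂ v z₀ ∧
      ∀ᶠ z in 𝓝 z₀, m * conj (v z) = ℓ (conj z) + v (g (conj z)) := by
  obtain ⟨r, hr, hball⟩ := Metric.eventually_nhds_iff_ball.1 <| hg.and <|
    hℓ.eventually_analyticAt.and <|
      hℓ.continuousAt.norm.eventually_le_const (lt_add_one ‖ℓ (conj z₀)‖)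
  have hconj : ∀ z ∈ ball z₀ r, conj z ∈ ball (conj z₀) r := fun z hz => by
    rwa [mem_ball, dist_conj_conj]
  have hTs : MapsTo (fun z => g (conj z)) (ball z₀ r) (ball z₀ r) := fun z hz => by
    have hz' := hconj z hz
    exact mem_ball_iff_norm.2 ((hball _ hz').1.2.trans_lt (mem_ball_iff_norm.1 hz'))
  have hT : DifferentiableOn ℂ (fun z => g (conj (conj z))) (conj ⁻¹' ball z₀ r) := by
    simp only [conj_conj, preimage_conj_ball]
    exact fun w hw => (hball w hw).1.1.differentiableWithinAt
  have ha : DifferentiableOn ℂ (fun z => conj (ℓ (conj z))) (ball z₀ r) := by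
    have h := DifferentiableOn.conj_conj isOpen_ball
      fun w hw => (hball w hw).2.1.differentiableAt.differentiableWithinAt
    rwa [preimage_conj_ball, conj_conj] at h
  have haM : ∀ z ∈ ball z₀ r, ‖conj (ℓ (conj z))‖ ≤ ‖ℓ (conj z₀)‖ + 1 := fun z hz => by
    rw [RCLike.norm_conj]
    exact (hball _ (hconj z hz)).2.2
  refine ⟨boettcherLog m (fun z => g (conj z)) fun z => conj (ℓ (conj z)),
    (differentiableOn_boettcherLog hm isOpen_ball hTs hT ha haM).analyticAt
      (ball_mem_nhds z₀ hr), ?_⟩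
  filter_upwards [ball_mem_nhds z₀ hr] with z hz
  simpa using congrArg conj (mul_boettcherLog hm hTs haM hz)

lemma exists_conj_pow_semiconj_of_log {z₀ : ℂ} {m : ℕ} {g ℓ v : ℂ → ℂ} (hv : AnalyticAt ℂ v z₀)
    (hg : ∀ᶠ z in 𝓝 z₀, g (conj z) = z₀ + (conj z - conj z₀) ^ m * Complex.exp (ℓ (conj z)))
    (hv_eq : ∀ᶠ z in 𝓝 z₀, m * conj (v z) = ℓ (conj z) + v (g (conj z))) :
    ∃ φ : ℂ → ℂ, AnalyticAt ℂ φ z₀ ∧ φ z₀ = 0 ∧ deriv φ z₀ ≠ 0 ∧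
      ∀ᶠ z in 𝓝 z₀, φ (g (conj z)) = conj (φ z) ^ m := by
  have hderiv : HasDerivAt (fun z => (z - z₀) * Complex.exp (v z)) (Complex.exp (v z₀)) z₀ := by
    simpa using ((hasDerivAt_id z₀).sub_const z₀).fun_mul hv.differentiableAt.hasDerivAt.cexp
  refine ⟨fun z => (z - z₀) * Complex.exp (v z),
    (analyticAt_id.sub analyticAt_const).mul hv.cexp, by simp,
    hderiv.deriv ▸ Complex.exp_ne_zero _, ?_⟩
  filter_upwards [hg, hv_eq] with z hgz hvz
  rw [map_mul, mul_pow, map_sub, ← Complex.exp_conj, ← Complex.exp_nat_mul, hvz,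
    Complex.exp_add, sub_eq_iff_eq_add'.2 hgz]
  ring

/-- Anti-holomorphic Boettcher theorem: an anti-analytic map `f z = g (conj z)` with a
superattracting fixed point of local degree `m ≥ 2` at `z₀` is locally conjugate to
`z ↦ (conj z)^m` via an analytic map `φ` with `φ z₀ = 0` and `deriv φ z₀ ≠ 0`. -/
theorem stmt3 (z₀ : ℂ) (m : ℕ) (hm : 2 ≤ m) (g h : ℂ → ℂ)
    (hh : AnalyticAt ℂ h ((starRingEnd ℂ) z₀))
    (hh0 : h ((starRingEnd ℂ) z₀) ≠ 0)
    (hg : ∀ᶠ w in nhds ((starRingEnd ℂ) z₀),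
      g w = z₀ + (w - (starRingEnd ℂ) z₀)^m * h w) :
    ∃ φ : ℂ → ℂ, AnalyticAt ℂ φ z₀ ∧ φ z₀ = 0 ∧ deriv φ z₀ ≠ 0 ∧
      ∀ᶠ z in nhds z₀, φ (g ((starRingEnd ℂ) z)) = ((starRingEnd ℂ) (φ z))^m := by
  obtain ⟨ℓ, hℓ, hexp⟩ := hh.exists_eventually_exp_eq hh0
  have hg_an : AnalyticAt ℂ g (conj z₀) :=
    (analyticAt_const.add (((analyticAt_id.sub analyticAt_const).pow m).mul hh)).congr
      (hg.mono fun w hw => hw.symm)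
  have hg_contr : ∀ᶠ w in 𝓝 (conj z₀),
      DifferentiableAt ℂ g w ∧ ‖g w - z₀‖ ≤ ‖w - conj z₀‖ := by
    filter_upwards [hg_an.eventually_analyticAt, hg,
      eventually_norm_sub_pow_mul_le hm hh.continuousAt] with w hdiff hgw hle
    exact ⟨hdiff.differentiableAt, by rwa [hgw, add_sub_cancel_left]⟩
  have hm' : 1 < |(m : ℝ)| := by
    rw [Nat.abs_cast]
    exact_mod_cast hm
  obtain ⟨v, hv, hv_eq⟩ := exists_analyticAt_mul_conj_eq_add_comp hm' hg_contr hℓ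
  refine exists_conj_pow_semiconj_of_log hv ?_ (by simpa using hv_eq)
  filter_upwards [(continuous_conj.tendsto z₀).eventually hg,
    (continuous_conj.tendsto z₀).eventually hexp] with z hgz hexpz
  rw [hgz, hexpz]
end

section
/- Bound on attracting fixed points of an anti-polynomial: if p is a polynomial over ℂ of degree d ≥ 2 and f(z) = p.eval (conj z), then the set of finite attracting and superattracting fixed points, {z : ℂ | p.eval (conj z) = z ∧ |p.derivative.eval (conj z)| < 1}, is finite and has at most d − 1 elements. (Planar form of the corollary that an anti-rational map of degree d ≥ 2 has at most 2d − 2 attracting or superattracting fixed points: each immediate basin must contain one of the at most d − 1 distinct finite critical points of f.) -/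
/-!
Write `f z = p (conj z)` and `q = p ∘ p̄`, so that `q = f ∘ f` is a holomorphic polynomial of
degree `d² ≥ 2`. An attracting fixed point `z` of `f` is an attracting fixed point of `q` with
multiplier `|p'(conj z)|²`. By Fatou's theorem the basin of `z` under `q` contains a critical point
`w` of `q`; since `q'(w) = conj (p'(conj w)) · p'(conj (f w))`, one of `w` and `f w` (which lies in
the same basin) is a critical point of `f`. Basins of distinct fixed points are disjoint, so this
gives an injection of the attracting fixed points into the conjugates of the at most `d - 1`
roots of `p'`.

Fatou's theorem: if the basin `B` of `z₀` contained no critical point of `q`, then, `B` being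
backward invariant, a disc around `z₀` inside `B` consists of regular values of every iterate `qⁿ`.
A polynomial is a covering map over its regular values, so the disc lifts to branches `gₙ` of
`q⁻ⁿ` with `gₙ z₀ = z₀` and values in the bounded set `B`. The Cauchy estimate bounds `|gₙ'(z₀)|`,
but `gₙ'(z₀) = q'(z₀)⁻ⁿ` and `0 < |q'(z₀)| < 1`.
-/

open Polynomial Metric Set Filter Topology Bornology ComplexConjugate

section Basin

variable {α : Type*} [TopologicalSpace α]

def basin (f : α → α) (x : α) : Set α := {z | Tendsto (fun n => f^[n] z) atTop (𝓝 x)}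

variable {f : α → α} {x : α}

theorem mem_basin_iff_map_mem {z : α} : f z ∈ basin f x ↔ z ∈ basin f x := by
  simp only [basin, mem_ofPred_eq, ← Function.iterate_succ_apply]
  exact tendsto_add_atTop_iff_nat (f := fun n => f^[n] z) 1

theorem Function.Commute.mapsTo_basin {g : α → α} (hfg : Function.Commute f g)
    (hg : Continuous g) : MapsTo g (basin f x) (basin f (g x)) := fun z hz => by
  simpa only [basin, mem_ofPred_eq, Function.comp_def, (hfg.iterate_left _).eq] using
    (hg.tendsto x).comp hz

theorem disjoint_basin [T2Space α] {y : α} (hxy : x ≠ y) : Disjoint (basin f x) (basin f y) :=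
  disjoint_left.2 fun _ hx hy => hxy (tendsto_nhds_unique hx hy)

end Basin

theorem ball_subset_basin {α : Type*} [PseudoMetricSpace α] {f : α → α} {x : α} {κ ε : ℝ}
    (hκ₀ : 0 ≤ κ) (hκ₁ : κ < 1) (hf : ∀ y ∈ ball x ε, dist (f y) x ≤ κ * dist y x) :
    ball x ε ⊆ basin f x := by
  intro y hy
  have key : ∀ n, f^[n] y ∈ ball x ε ∧ dist (f^[n] y) x ≤ κ ^ n * dist y x := by
    intro n
    induction n with
    | zero => simpa using hy
    | succ n ih =>
      rw [Function.iterate_succ_apply']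
      have h := hf _ ih.1
      refine ⟨mem_ball.2 (h.trans_lt ?_), ?_⟩
      · calc κ * dist (f^[n] y) x ≤ dist (f^[n] y) x :=
              mul_le_of_le_one_left dist_nonneg hκ₁.le
          _ < ε := ih.1
      · calc dist (f (f^[n] y)) x ≤ κ * (κ ^ n * dist y x) :=
              h.trans (mul_le_mul_of_nonneg_left ih.2 hκ₀)
          _ = κ ^ (n + 1) * dist y x := by ring
  rw [basin, mem_ofPred_eq, tendsto_iff_dist_tendsto_zero]
  refine squeeze_zero (fun _ => dist_nonneg) (fun n => (key n).2) ?_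
  simpa using (tendsto_pow_atTop_nhds_zero_of_lt_one hκ₀ hκ₁).mul_const (dist y x)

theorem basin_mem_nhds_of_hasDerivAt {𝕜 : Type*} [NontriviallyNormedField 𝕜] {f : 𝕜 → 𝕜}
    {f' x : 𝕜} (hf : HasDerivAt f f' x) (hfix : f x = x) (hf' : ‖f'‖ < 1) :
    basin f x ∈ 𝓝 x := by
  set κ := (1 + ‖f'‖) / 2 with hκ
  have hlin := (hasDerivAt_iff_isLittleO.1 hf).def (c := κ - ‖f'‖) (by linarith)
  obtain ⟨ε, hε, hball⟩ := Metric.eventually_nhds_iff_ball.1 hlin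
  refine mem_of_superset (ball_mem_nhds x hε)
    (ball_subset_basin (κ := κ) (by positivity) (by linarith) fun y hy => ?_)
  have h := hball y hy
  rw [hfix] at h
  rw [dist_eq_norm, dist_eq_norm]
  calc ‖f y - x‖ ≤ ‖f y - x - (y - x) • f'‖ + ‖(y - x) • f'‖ := norm_le_norm_sub_add _ _
    _ ≤ (κ - ‖f'‖) * ‖y - x‖ + ‖y - x‖ * ‖f'‖ := by rw [norm_smul]; gcongr
    _ = κ * ‖y - x‖ := by ring

namespace Polynomial

theorem exists_two_mul_norm_le_norm_eval {𝕜 : Type*} [NormedField 𝕜] {q : 𝕜[X]}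
    (hq : 2 ≤ q.natDegree) : ∃ R > 0, ∀ z : 𝕜, R ≤ ‖z‖ → 2 * ‖z‖ ≤ ‖q.eval z‖ := by
  have hdeg : 0 < q.divX.degree :=
    natDegree_pos_iff_degree_pos.1 (by rw [natDegree_divX_eq_natDegree_tsub_one]; omega)
  have hlarge : ∀ᶠ z in cobounded 𝕜, 1 ≤ ‖z‖ ∧ 2 + ‖q.coeff 0‖ ≤ ‖q.divX.eval z‖ :=
    (eventually_cobounded_le_norm 1).and
      ((q.divX.tendsto_norm_atTop hdeg tendsto_norm_cobounded_atTop).eventually_ge_atTop _)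
  obtain ⟨R, -, hR⟩ := hasBasis_cobounded_norm.eventually_iff.1 hlarge
  refine ⟨max R 1, by positivity, fun z hz => ?_⟩
  obtain ⟨hz₁, hzq⟩ := hR (le_of_max_le_left hz)
  have hsplit : q.eval z = q.divX.eval z * z + q.coeff 0 := by
    conv_lhs => rw [← divX_mul_X_add q]
    simp
  calc 2 * ‖z‖ ≤ (2 + ‖q.coeff 0‖) * ‖z‖ - ‖q.coeff 0‖ := by nlinarith [norm_nonneg (q.coeff 0)]
    _ ≤ ‖q.divX.eval z‖ * ‖z‖ - ‖q.coeff 0‖ := by gcongr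
    _ ≤ ‖q.eval z‖ := by
      have := norm_sub_le (q.divX.eval z * z + q.coeff 0) (q.coeff 0)
      rw [add_sub_cancel_right, norm_mul] at this
      rw [hsplit]
      linarith

theorem isBounded_basin {𝕜 : Type*} [NormedField 𝕜] {q : 𝕜[X]} (hq : 2 ≤ q.natDegree) {x : 𝕜}
    (hx : q.eval x = x) : IsBounded (basin (q.eval ·) x) := by
  -- `{z | R ≤ ‖z‖}` is closed, forward invariant and contains no fixed point.
  obtain ⟨R, hR, hgrow⟩ := exists_two_mul_norm_le_norm_eval hq
  refine (isBounded_ball (x := 0) (r := R)).subset fun z hz => ?_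
  by_contra hzR
  rw [mem_ball_zero_iff, not_lt] at hzR
  have hmaps : MapsTo (q.eval ·) {z | R ≤ ‖z‖} {z | R ≤ ‖z‖} := fun w (hw : R ≤ ‖w‖) => by
    show R ≤ ‖q.eval w‖
    linarith [hgrow w hw, norm_nonneg w]
  have hxR : R ≤ ‖x‖ := (isClosed_le continuous_const continuous_norm).mem_of_tendsto hz
    (Eventually.of_forall fun n => hmaps.iterate n hzR)
  linarith [hx ▸ hgrow x hxR]

section Iterate

variable {R : Type*} [CommSemiring R] {q : R[X]}

theorem eval_iterate_comp_X (n : ℕ) (z : R) : (q.comp^[n] X).eval z = (q.eval ·)^[n] z := by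
  simp

theorem derivative_iterate_comp_X_eval_of_eval_eq {z : R} (hz : q.eval z = z) (n : ℕ) :
    (q.comp^[n] X).derivative.eval z = q.derivative.eval z ^ n := by
  induction n with
  | zero => simp
  | succ n ih =>
    rw [Function.iterate_succ_apply', derivative_comp, eval_mul, eval_comp, ih,
      eval_iterate_comp_X, Function.iterate_fixed hz, pow_succ]

end Iterate

theorem eval_iterate_comp_X_notMem_of_derivative_eval_eq_zero {R : Type*} [CommRing R]
    [IsDomain R] {q : R[X]} {B : Set R}
    (hcrit : ∀ z ∈ B, q.derivative.eval z ≠ 0) (hpre : MapsTo (q.eval ·) Bᶜ Bᶜ) (n : ℕ) {z : R}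
    (hz : (q.comp^[n] X).derivative.eval z = 0) : (q.comp^[n] X).eval z ∉ B := by
  induction n with
  | zero => simp at hz
  | succ n ih =>
    rw [Function.iterate_succ_apply', derivative_comp, eval_mul, eval_comp] at hz
    rw [Function.iterate_succ_apply', eval_comp]
    refine hpre ?_
    rcases mul_eq_zero.1 hz with h | h
    · exact ih h
    · exact fun hB => hcrit _ hB h

theorem exists_hasDerivAt_rightInverse_on_ball {P : ℂ[X]} {c x₀ : ℂ} {r : ℝ} (hr : 0 < r)
    (hreg : ∀ z, P.derivative.eval z = 0 → P.eval z ∉ ball c r) (hx₀ : P.eval x₀ = c) :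
    ∃ g : ℂ → ℂ, g c = x₀ ∧
      ∀ x ∈ ball c r, P.eval (g x) = x ∧ HasDerivAt g (P.derivative.eval (g x))⁻¹ x := by
  classical
  have := contractibleSpace_ball (x := c) hr
  have := isOpen_ball.locallyPathConnectedSpace (U := ball c r)
  obtain ⟨F, ⟨hFc, hF⟩, -⟩ := P.isCoveringMapOn_eval.existsUnique_continuousMap_lifts
    ⟨Subtype.val, continuous_subtype_val⟩ (a₀ := ⟨c, mem_ball_self hr⟩) hx₀
    fun x ⟨z, hz, hzx⟩ => hreg z hz (by simp [hzx])
  set g : ℂ → ℂ := fun x => if hx : x ∈ ball c r then F ⟨x, hx⟩ else x₀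
  have hgF : ∀ x (hx : x ∈ ball c r), g x = F ⟨x, hx⟩ := fun x hx => dif_pos hx
  have hPg : ∀ x ∈ ball c r, P.eval (g x) = x := fun x hx => by
    rw [hgF x hx]
    exact congrFun hF ⟨x, hx⟩
  have hgc : ContinuousOn g (ball c r) := by
    rw [continuousOn_iff_continuous_domRestrict]
    exact F.continuous.congr fun x => (hgF x x.2).symm
  refine ⟨g, (hgF c (mem_ball_self hr)).trans hFc, fun x hx => ⟨hPg x hx, ?_⟩⟩
  refine HasDerivAt.of_local_left_inverse (hgc.continuousAt (isOpen_ball.mem_nhds hx))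
    (P.hasDerivAt _) (fun h => hreg _ h ((hPg x hx).symm ▸ hx))
    (eventually_of_mem (isOpen_ball.mem_nhds hx) hPg)

theorem exists_derivative_eval_eq_zero_of_isBounded {q : ℂ[X]} {B : Set ℂ} {z₀ : ℂ} {r : ℝ}
    (hB : IsBounded B) (hr : 0 < r) (hball : ball z₀ r ⊆ B) (hpre : MapsTo (q.eval ·) Bᶜ Bᶜ)
    (hfix : q.eval z₀ = z₀) (hattr : ‖q.derivative.eval z₀‖ < 1) :
    ∃ c ∈ B, q.derivative.eval c = 0 := by
  by_contra! hcrit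
  have hmult : q.derivative.eval z₀ ≠ 0 := hcrit z₀ (hball (mem_ball_self hr))
  obtain ⟨M, hM⟩ := hB.subset_closedBall z₀
  have hbound : ∀ n : ℕ, ‖q.derivative.eval z₀‖⁻¹ ^ n ≤ M / r := by
    intro n
    obtain ⟨g, hg₀, hg⟩ := exists_hasDerivAt_rightInverse_on_ball (P := q.comp^[n] X) hr
      (fun z hz hzB => eval_iterate_comp_X_notMem_of_derivative_eval_eq_zero hcrit hpre n hz
        (hball hzB))
      (by rw [eval_iterate_comp_X, Function.iterate_fixed hfix])
    have hgB : MapsTo g (ball z₀ r) B := fun x hx => by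
      by_contra hgx
      have := hpre.iterate n hgx
      rw [← eval_iterate_comp_X, (hg x hx).1] at this
      exact this (hball hx)
    have hcauchy := Complex.norm_deriv_le_div_of_mapsTo_ball
      (fun x hx => (hg x hx).2.differentiableAt.differentiableWithinAt)
      (by rw [hg₀]; exact hgB.mono_right hM) hr
    rwa [(hg z₀ (mem_ball_self hr)).2.deriv, hg₀,
      derivative_iterate_comp_X_eval_of_eval_eq hfix, norm_inv, norm_pow, ← inv_pow] at hcauchy
  obtain ⟨n, hn⟩ := pow_unbounded_of_one_lt (M / r)
    ((one_lt_inv₀ (norm_pos_iff.2 hmult)).2 hattr)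
  exact (hbound n).not_gt hn

theorem exists_derivative_eval_eq_zero_mem_basin {q : ℂ[X]} (hq : 2 ≤ q.natDegree) {z₀ : ℂ}
    (hfix : q.eval z₀ = z₀) (hattr : ‖q.derivative.eval z₀‖ < 1) :
    ∃ c ∈ basin (q.eval ·) z₀, q.derivative.eval c = 0 := by
  obtain ⟨r, hr, hball⟩ := Metric.mem_nhds_iff.1
    (basin_mem_nhds_of_hasDerivAt (q.hasDerivAt z₀) hfix hattr)
  exact exists_derivative_eval_eq_zero_of_isBounded (isBounded_basin hq hfix) hr hball
    (fun z hz hqz => hz (mem_basin_iff_map_mem.1 hqz)) hfix hattr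

theorem eval_map_conj (p : ℂ[X]) (w : ℂ) : (p.map conj).eval w = conj (p.eval (conj w)) := by
  conv_lhs => rw [← Complex.conj_conj w]
  rw [eval_map, eval₂_hom]

theorem exists_derivative_eval_conj_eq_zero_mem_basin {p : ℂ[X]} (hp : 2 ≤ p.natDegree) {z : ℂ}
    (hfix : p.eval (conj z) = z) (hattr : ‖p.derivative.eval (conj z)‖ < 1) :
    ∃ u ∈ basin (fun w => p.eval (conj (p.eval (conj w)))) z,
      p.derivative.eval (conj u) = 0 := by
  set q := p.comp (p.map conj)
  have hq : ∀ w, q.eval w = p.eval (conj (p.eval (conj w))) := fun w => by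
    rw [eval_comp, eval_map_conj]
  have hq' : ∀ w, q.derivative.eval w =
      conj (p.derivative.eval (conj w)) * p.derivative.eval (conj (p.eval (conj w))) := by
    intro w
    rw [derivative_comp, derivative_map, eval_mul, eval_comp, eval_map_conj, eval_map_conj]
  have hqdeg : 2 ≤ q.natDegree := by
    rw [natDegree_comp, natDegree_map_eq_of_injective (RingHom.injective _)]
    nlinarith
  have hqattr : ‖q.derivative.eval z‖ < 1 := by
    rw [hq', hfix, norm_mul, Complex.norm_conj]
    exact mul_lt_one_of_nonneg_of_lt_one_left (norm_nonneg _) hattr hattr.le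
  obtain ⟨c, hc, hcrit⟩ := exists_derivative_eval_eq_zero_mem_basin hqdeg
    (by rw [hq, hfix, hfix]) hqattr
  simp only [hq] at hc
  rw [hq', mul_eq_zero, map_eq_zero] at hcrit
  rcases hcrit with hcrit | hcrit
  · exact ⟨c, hc, hcrit⟩
  · refine ⟨p.eval (conj c), ?_, hcrit⟩
    have hcomm : Function.Commute (fun w => p.eval (conj (p.eval (conj w))))
        (fun w => p.eval (conj w)) := fun _ => rfl
    simpa only [hfix] using hcomm.mapsTo_basin (by fun_prop) hc

end Polynomial

/-- Bound on attracting and superattracting fixed points of an anti-polynomial of degree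
`d ≥ 2`: there are at most `d - 1` of them. -/
theorem stmt6 (p : Polynomial ℂ) (d : ℕ) (hd : 2 ≤ d) (hdeg : p.natDegree = d) :
    {z : ℂ | p.eval ((starRingEnd ℂ) z) = z ∧
      ‖p.derivative.eval ((starRingEnd ℂ) z)‖ < 1}.Finite ∧
    Set.ncard {z : ℂ | p.eval ((starRingEnd ℂ) z) = z ∧
      ‖p.derivative.eval ((starRingEnd ℂ) z)‖ < 1} ≤ d - 1 := by
  set S := {z : ℂ | p.eval (conj z) = z ∧ ‖p.derivative.eval (conj z)‖ < 1}
  have hcrit : ∀ z ∈ S, ∃ u ∈ basin (fun w => p.eval (conj (p.eval (conj w)))) z,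
      p.derivative.eval (conj u) = 0 := fun z hz =>
    exists_derivative_eval_conj_eq_zero_mem_basin (hdeg ▸ hd) hz.1 hz.2
  choose! u hu_basin hu_crit using hcrit
  have hp' : p.derivative ≠ 0 := fun h => by
    have := derivative_eq_zero.1 h
    omega
  have hmaps : MapsTo (fun z => conj (u z)) S (p.derivative.rootSet ℂ) := fun z hz =>
    mem_rootSet.2 ⟨hp', by simpa [aeval_def] using hu_crit z hz⟩
  have hinj : InjOn (fun z => conj (u z)) S := fun z hz w hw h => by
    by_contra hne
    exact disjoint_left.1 (disjoint_basin hne) (hu_basin z hz)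
      ((star_injective h) ▸ hu_basin w hw)
  have hfin := rootSet_finite p.derivative ℂ
  refine ⟨hfin.of_injOn hmaps hinj, (ncard_le_ncard_of_injOn _ hmaps hinj hfin).trans ?_⟩
  exact (ncard_rootSet_le _ _).trans (hdeg ▸ natDegree_derivative_le p)
end

section
/- The regularized incomplete beta polynomials are critically fixed: for natural numbers m₀, m₁ ≥ 1, let P be the polynomial over ℂ with constant coefficient 0 and derivative P' = C(((m₀+m₁+1)! / (m₀! · m₁!) : ℂ)) · X^{m₀} · (1 − X)^{m₁}. Then P has degree m₀ + m₁ + 1, P(0) = 0, P(1) = 1, and the roots of P' are exactly 0 and 1, with multiplicities m₀ and m₁ respectively; that is, P is a critically fixed polynomial of degree m₀ + m₁ + 1 whose critical points are 0 and 1 with multiplicities m₀ and m₁, both fixed by P. -/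
open Polynomial

private lemma fact_prod_aux (m k : ℕ) :
    (m.factorial : ℂ) * ∏ j ∈ Finset.range k, ((m : ℂ) + 1 + j) =
      ((m + k).factorial : ℂ) := by
  induction k with
  | zero => simp
  | succ k ih =>
    rw [Finset.prod_range_succ, ← mul_assoc, ih]
    push_cast [← Nat.add_assoc, Nat.factorial_succ]
    ring

/-- The regularized incomplete beta polynomials are critically fixed: if `P(0) = 0` and
`P' = ((m₀+m₁+1)! / (m₀! m₁!)) X^{m₀} (1-X)^{m₁}` with `m₀, m₁ ≥ 1`, then `P` has degree
`m₀+m₁+1`, fixes `0` and `1`, and its critical points are exactly `0` and `1`, with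
multiplicities `m₀` and `m₁`. -/
theorem stmt12 (m₀ m₁ : ℕ) (hm₀ : 1 ≤ m₀) (hm₁ : 1 ≤ m₁) (P : Polynomial ℂ)
    (hP0 : P.coeff 0 = 0)
    (hP' : P.derivative
      = C (((m₀ + m₁ + 1).factorial : ℂ) / ((m₀.factorial : ℂ) * (m₁.factorial : ℂ)))
        * X ^ m₀ * (1 - X) ^ m₁) :
    P.natDegree = m₀ + m₁ + 1 ∧
    P.eval 0 = 0 ∧
    P.eval 1 = 1 ∧
    (∀ c : ℂ, P.derivative.eval c = 0 ↔ c = 0 ∨ c = 1) ∧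
    P.derivative.rootMultiplicity 0 = m₀ ∧
    P.derivative.rootMultiplicity 1 = m₁ := by
  set α : ℂ := ((m₀ + m₁ + 1).factorial : ℂ) / ((m₀.factorial : ℂ) * (m₁.factorial : ℂ)) with hαdef
  have hf0 : (m₀.factorial : ℂ) ≠ 0 := Nat.cast_ne_zero.2 m₀.factorial_ne_zero
  have hf1 : (m₁.factorial : ℂ) ≠ 0 := Nat.cast_ne_zero.2 m₁.factorial_ne_zero
  have hfs : ((m₀ + m₁ + 1).factorial : ℂ) ≠ 0 := Nat.cast_ne_zero.2 (m₀ + m₁ + 1).factorial_ne_zero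
  have hαne : α ≠ 0 := div_ne_zero hfs (mul_ne_zero hf0 hf1)
  have heval : ∀ c : ℂ, P.derivative.eval c = α * c ^ m₀ * (1 - c) ^ m₁ := by
    intro c; rw [hP']; simp
  -- roots of the derivative
  have hroot : ∀ c : ℂ, P.derivative.eval c = 0 ↔ c = 0 ∨ c = 1 := by
    intro c
    rw [heval c, mul_eq_zero, mul_eq_zero]
    have h0 : m₀ ≠ 0 := by omega
    have h1 : m₁ ≠ 0 := by omega
    simp only [hαne, false_or, pow_eq_zero_iff h0, pow_eq_zero_iff h1, sub_eq_zero]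
    constructor
    · rintro (h | h)
      · exact Or.inl h
      · exact Or.inr h.symm
    · rintro (h | h)
      · exact Or.inl h
      · exact Or.inr h.symm
  -- degree of the derivative
  have hdeg1X : (1 - X : ℂ[X]).natDegree = 1 := by
    rw [show (1 - X : ℂ[X]) = -(X - C 1) by rw [neg_sub, C_1]]
    rw [natDegree_neg, natDegree_X_sub_C]
  have h1Xne : (1 - X : ℂ[X]) ≠ 0 := fun h => by
    simpa using congrArg (eval 0) h
  have hPd : P.derivative.natDegree = m₀ + m₁ := by
    rw [hP', natDegree_mul (mul_ne_zero (C_ne_zero.2 hαne) (pow_ne_zero _ X_ne_zero))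
        (pow_ne_zero _ h1Xne),
      natDegree_mul (C_ne_zero.2 hαne) (pow_ne_zero _ X_ne_zero),
      natDegree_C, natDegree_X_pow, natDegree_pow, hdeg1X]
    ring
  have hP'ne : P.derivative ≠ 0 := fun h => by
    rw [h, natDegree_zero] at hPd; omega
  -- degree of P
  have hPdeg : P.natDegree = m₀ + m₁ + 1 := by
    have hub : P.natDegree ≤ m₀ + m₁ + 1 := by
      rw [natDegree_le_iff_coeff_eq_zero]
      intro N hN
      have hc : P.derivative.coeff (N - 1) = 0 :=
        coeff_eq_zero_of_natDegree_lt (by omega : P.derivative.natDegree < N - 1)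
      rw [coeff_derivative] at hc
      have hNc : ((N - 1 : ℕ) : ℂ) + 1 ≠ 0 := by
        have : (((N - 1 : ℕ) : ℂ) + 1) = ((N - 1 + 1 : ℕ) : ℂ) := by push_cast; ring
        rw [this, Nat.cast_ne_zero]; omega
      have := (mul_eq_zero.1 hc).resolve_right hNc
      rwa [show N - 1 + 1 = N by omega] at this
    have hne0 : P.natDegree ≠ 0 := by
      intro h
      exact hP'ne (by rw [eq_C_of_natDegree_eq_zero h, derivative_C])
    have := natDegree_derivative_lt hne0
    omega
  -- P(0) = 0
  have hPeval0 : P.eval 0 = 0 := by rw [← coeff_zero_eq_eval_zero, hP0]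
  -- P(1) = 1 via FTC and the Beta integral
  have hcont : Continuous fun x : ℝ => P.derivative.eval (x : ℂ) :=
    P.derivative.continuous.comp Complex.continuous_ofReal
  have hFTC : ∫ x in (0:ℝ)..1, P.derivative.eval (x : ℂ) = P.eval 1 - P.eval 0 := by
    have := intervalIntegral.integral_eq_sub_of_hasDerivAt
      (f := fun t : ℝ => P.eval (t : ℂ)) (f' := fun t : ℝ => P.derivative.eval (t : ℂ))
      (a := 0) (b := 1)
      (fun x _ => (P.hasDerivAt (x : ℂ)).comp_ofReal)
      (hcont.intervalIntegrable 0 1)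
    simpa using this
  have hbeta : ∫ x in (0:ℝ)..1, P.derivative.eval (x : ℂ)
      = α * Complex.betaIntegral ((m₀ : ℂ) + 1) ((m₁ : ℂ) + 1) := by
    rw [Complex.betaIntegral, ← intervalIntegral.integral_const_mul]
    refine intervalIntegral.integral_congr fun x hx => ?_
    rw [heval, show ((m₀ : ℂ) + 1 - 1) = ((m₀ : ℕ) : ℂ) by ring,
      show ((m₁ : ℂ) + 1 - 1) = ((m₁ : ℕ) : ℂ) by ring,
      Complex.cpow_natCast, Complex.cpow_natCast]
    ring
  have hprod := fact_prod_aux m₀ (m₁ + 1)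
  have hprodne : (∏ j ∈ Finset.range (m₁ + 1), ((m₀ : ℂ) + 1 + j)) ≠ 0 := by
    intro h
    rw [h, mul_zero] at hprod
    exact (Nat.cast_ne_zero.2 (m₀ + (m₁ + 1)).factorial_ne_zero) hprod.symm
  have hval : Complex.betaIntegral ((m₀ : ℂ) + 1) ((m₁ : ℂ) + 1)
      = (m₁.factorial : ℂ) / (∏ j ∈ Finset.range (m₁ + 1), ((m₀ : ℂ) + 1 + j)) := by
    have hu : 0 < Complex.re ((m₀ : ℂ) + 1) := by
      simp only [Complex.add_re, Complex.natCast_re, Complex.one_re]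
      positivity
    have := Complex.betaIntegral_eval_nat_add_one_right hu m₁
    simpa using this
  have hPeval1 : P.eval 1 = 1 := by
    have key : P.eval 1 - P.eval 0 = α * ((m₁.factorial : ℂ)
        / (∏ j ∈ Finset.range (m₁ + 1), ((m₀ : ℂ) + 1 + j))) := by
      rw [← hval, ← hbeta, hFTC]
    rw [hPeval0, sub_zero] at key
    rw [key, hαdef]
    have hfac : ((m₀ + (m₁ + 1)).factorial : ℂ) = ((m₀ + m₁ + 1).factorial : ℂ) := by
      norm_num [← Nat.add_assoc]
    rw [hfac] at hprod
    rw [← hprod]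
    field_simp
  -- root multiplicities
  have hm0mult : P.derivative.rootMultiplicity 0 = m₀ := by
    have hrepr : P.derivative = (C α * (1 - X) ^ m₁) * (X - C 0) ^ m₀ := by
      rw [hP', C_0, sub_zero]; ring
    have hne : (C α * (1 - X) ^ m₁ : ℂ[X]) ≠ 0 :=
      mul_ne_zero (C_ne_zero.2 hαne) (pow_ne_zero _ h1Xne)
    rw [hrepr, rootMultiplicity_mul_X_sub_C_pow hne,
      rootMultiplicity_eq_zero (by simp [IsRoot, hαne]), zero_add]
  have hm1mult : P.derivative.rootMultiplicity 1 = m₁ := by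
    have hfacpow : (1 - X : ℂ[X]) ^ m₁ = (-1) ^ m₁ * (X - C 1) ^ m₁ := by
      rw [← mul_pow, neg_one_mul, neg_sub, C_1]
    have hrepr : P.derivative = (C α * X ^ m₀ * (-1) ^ m₁) * (X - C 1) ^ m₁ := by
      rw [hP', hfacpow]; ring
    have hne : (C α * X ^ m₀ * (-1) ^ m₁ : ℂ[X]) ≠ 0 :=
      mul_ne_zero (mul_ne_zero (C_ne_zero.2 hαne) (pow_ne_zero _ X_ne_zero))
        (pow_ne_zero _ (by norm_num))
    rw [hrepr, rootMultiplicity_mul_X_sub_C_pow hne,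
      rootMultiplicity_eq_zero (by simp [IsRoot, hαne]), zero_add]
  exact ⟨hPdeg, hPeval0, hPeval1, hroot, hm0mult, hm1mult⟩
end
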